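/- arXiv:1906.09709 — 3 statements merged into one kernel-verified Lean document; each statement's English description precedes it below -/
import Mathlib

section
/- If A <: B in the new subtyping relation and C ⊆⁺ B (every part of C is a part of B), then A <: C. -/
inductive Ty : Type where
  | U : Ty
  | const : ℕ → Ty
  | arrow : Ty → Ty → Ty
  | inter : Ty → Ty → Ty

/-- The part relation A ∈⁺ B. -/
inductive Ty.Part : Ty → Ty → Prop where
  | atomU : Ty.Part .U .U
  | atomC (n : ℕ) : Ty.Part (.const n) (.const n)
  | arrow (A B : Ty) : Ty.Part (.arrow A B) (.arrow A B)
  | interL {A B C : Ty} : Ty.Part A B → Ty.Part A (.inter B C)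
  | interR {A B C : Ty} : Ty.Part A C → Ty.Part A (.inter B C)

/-- Containment A ⊆⁺ B: every part of A is a part of B. -/
def Ty.Contain (A B : Ty) : Prop := ∀ C, Ty.Part C A → Ty.Part C B

/-- Partial domain function. -/
def Ty.dom : Ty → Option Ty
  | .arrow A _ => some A
  | .inter A B => do pure (.inter (← A.dom) (← B.dom))
  | _ => none

/-- Partial codomain function. -/
def Ty.cod : Ty → Option Ty
  | .arrow _ B => some B
  | .inter A B => do pure (.inter (← A.cod) (← B.cod))
  | _ => none

/-- The top predicate: types equivalent to U. -/
inductive Ty.Top : Ty → Prop where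
  | u : Ty.Top .U
  | arrow {A B : Ty} : Ty.Top B → Ty.Top (.arrow A B)
  | inter {A B : Ty} : Ty.Top A → Ty.Top B → Ty.Top (.inter A B)

/-- topInCod(D): some function part of D has a top codomain. -/
def Ty.TopInCod (D : Ty) : Prop := ∃ A B : Ty, Ty.Part (.arrow A B) D ∧ Ty.Top B

/-- The new subtyping relation A <: B. -/
inductive Ty.NSub : Ty → Ty → Prop where
  | reflU : Ty.NSub .U .U
  | reflC (n : ℕ) : Ty.NSub (.const n) (.const n)
  | lbL {A B C : Ty} : Ty.NSub A C → Ty.NSub (.inter A B) C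
  | lbR {A B C : Ty} : Ty.NSub B C → Ty.NSub (.inter A B) C
  | glb {A C D : Ty} : Ty.NSub A C → Ty.NSub A D → Ty.NSub A (.inter C D)
  | arrow {A B C D dB cB : Ty} :
      Ty.Contain B A → B.dom = some dB → B.cod = some cB →
      Ty.NSub C dB → Ty.NSub cB D → ¬ Ty.Top D → ¬ Ty.TopInCod B →
      Ty.NSub A (.arrow C D)
  | utop {A : Ty} : Ty.NSub A .U
  | uarrow {A C D : Ty} : Ty.Top D → Ty.NSub A (.arrow C D)

/-- BCD subtyping A ≤ B. -/
inductive Ty.BSub : Ty → Ty → Prop where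
  | refl (A : Ty) : Ty.BSub A A
  | trans {A B C : Ty} : Ty.BSub A B → Ty.BSub B C → Ty.BSub A C
  | inclL (A B : Ty) : Ty.BSub (.inter A B) A
  | inclR (A B : Ty) : Ty.BSub (.inter A B) B
  | glb {A C D : Ty} : Ty.BSub A C → Ty.BSub A D → Ty.BSub A (.inter C D)
  | arrow {A B C D : Ty} : Ty.BSub C A → Ty.BSub B D → Ty.BSub (.arrow A B) (.arrow C D)
  | distrib (A B C : Ty) : Ty.BSub (.inter (.arrow A B) (.arrow A C)) (.arrow A (.inter B C))
  | utop (A : Ty) : Ty.BSub A .U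
  | uarrow (C : Ty) : Ty.BSub .U (.arrow C .U)

/-- C→D factors A. -/
def Ty.Factors (C D A : Ty) : Prop :=
  ∃ B dB cB : Ty, Ty.Contain B A ∧ B.dom = some dB ∧ B.cod = some cB ∧
    Ty.NSub C dB ∧ Ty.NSub cB D ∧ ¬ Ty.TopInCod B

def Ty.size : Ty → ℕ
  | .U => 0
  | .const _ => 0
  | .arrow A B => 1 + A.size + B.size
  | .inter A B => 1 + A.size + B.size

def Ty.depth : Ty → ℕ
  | .U => 0
  | .const _ => 0
  | .arrow A B => 1 + max A.depth B.depth
  | .inter A B => max A.depth B.depth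

lemma nsub_part (A B P : Ty) (h : Ty.NSub A B) (hp : Ty.Part P B) : Ty.NSub A P := by
  induction h generalizing P with
  | reflU => cases hp; exact .reflU
  | reflC n => cases hp; exact .reflC n
  | lbL _ ih => exact .lbL (ih _ hp)
  | lbR _ ih => exact .lbR (ih _ hp)
  | glb _ _ ih1 ih2 =>
    cases hp with
    | interL h => exact ih1 _ h
    | interR h => exact ih2 _ h
  | arrow hc hd hcod h1 h2 ht htc _ _ =>
    cases hp; exact .arrow hc hd hcod h1 h2 ht htc
  | utop => cases hp; exact .utop
  | uarrow ht => cases hp; exact .uarrow ht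

lemma nsub_of_parts (A : Ty) : ∀ C : Ty, (∀ P, Ty.Part P C → Ty.NSub A P) → Ty.NSub A C := by
  intro C
  induction C with
  | U => intro h; exact h _ .atomU
  | const n => intro h; exact h _ (.atomC n)
  | arrow C D _ _ => intro h; exact h _ (.arrow C D)
  | inter C D ih1 ih2 =>
    intro h
    exact .glb (ih1 fun P hp => h _ (.interL hp)) (ih2 fun P hp => h _ (.interR hp))

theorem nsub_contain (A B C : Ty) (h : Ty.NSub A B) (hc : Ty.Contain C B) : Ty.NSub A C :=
  nsub_of_parts A C fun P hp => nsub_part A B P h (hc P hp)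
end

section
/- The new subtyping relation is transitive: if A <: B and B <: C, then A <: C. -/
section TransAux

lemma nsub_refl : ∀ A : Ty, Ty.NSub A A := by
  intro A
  induction A with
  | U => exact .reflU
  | const n => exact .reflC n
  | arrow A B ihA ihB =>
    by_cases h : Ty.Top B
    · exact .uarrow h
    · refine .arrow (B := .arrow A B) (fun C hc => hc) rfl rfl ihA ihB h ?_
      rintro ⟨P, Q, hp, ht⟩
      cases hp
      exact h ht
  | inter A B ihA ihB => exact .glb (.lbL ihA) (.lbR ihB)

lemma nsub_inter_inv : ∀ {A E : Ty}, Ty.NSub A E → ∀ {C D : Ty}, E = Ty.inter C D →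
    Ty.NSub A C ∧ Ty.NSub A D := by
  intro A E h
  induction h with
  | reflU => intro C D h; cases h
  | reflC n => intro C D h; cases h
  | lbL h ih => intro C D hE; exact ⟨.lbL (ih hE).1, .lbL (ih hE).2⟩
  | lbR h ih => intro C D hE; exact ⟨.lbR (ih hE).1, .lbR (ih hE).2⟩
  | glb h1 h2 ih1 ih2 => intro C D hE; cases hE; exact ⟨h1, h2⟩
  | arrow hcon hdom hcod hC hD hnt hntic ih1 ih2 => intro C D h; cases h
  | utop => intro C D h; cases h
  | uarrow ht => intro C D h; cases h

lemma part_inv : ∀ {A E : Ty}, Ty.NSub A E → ∀ {P Q : Ty}, Ty.Part (.arrow P Q) E →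
    ¬ Ty.Top Q →
    ∃ B'' dB'' cB'', Ty.Contain B'' A ∧ B''.dom = some dB'' ∧ B''.cod = some cB'' ∧
      Ty.NSub P dB'' ∧ Ty.NSub cB'' Q ∧ ¬ Ty.TopInCod B'' := by
  intro A E h
  induction h with
  | reflU => intro P Q hp _; cases hp
  | reflC n => intro P Q hp _; cases hp
  | lbL h ih =>
    intro P Q hp ht
    obtain ⟨B, dB, cB, hcon, hdom, hcod, h1, h2, h3⟩ := ih hp ht
    exact ⟨B, dB, cB, fun X hx => .interL (hcon X hx), hdom, hcod, h1, h2, h3⟩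
  | lbR h ih =>
    intro P Q hp ht
    obtain ⟨B, dB, cB, hcon, hdom, hcod, h1, h2, h3⟩ := ih hp ht
    exact ⟨B, dB, cB, fun X hx => .interR (hcon X hx), hdom, hcod, h1, h2, h3⟩
  | glb h1 h2 ih1 ih2 =>
    intro P Q hp ht
    cases hp with
    | interL hp => exact ih1 hp ht
    | interR hp => exact ih2 hp ht
  | arrow hcon hdom hcod hC hD hnt hntic ih1 ih2 =>
    intro P Q hp ht
    cases hp
    exact ⟨_, _, _, hcon, hdom, hcod, hC, hD, hntic⟩
  | utop => intro P Q hp _; cases hp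
  | uarrow htop => intro P Q hp ht; cases hp; exact absurd htop ht

lemma part_depth_le : ∀ {P B : Ty}, Ty.Part P B → P.depth ≤ B.depth := by
  intro P B h
  induction h with
  | atomU => exact le_refl _
  | atomC n => exact le_refl _
  | arrow A B => exact le_refl _
  | interL h ih => exact le_trans ih (by simp [Ty.depth])
  | interR h ih => exact le_trans ih (by simp [Ty.depth])

lemma domcod_depth : ∀ (B' : Ty) {dB' cB' B : Ty}, Ty.Contain B' B →
    B'.dom = some dB' → B'.cod = some cB' →
    dB'.depth < B.depth ∧ cB'.depth < B.depth := by
  intro B'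
  induction B' with
  | U => intro dB' cB' B _ hd _; simp [Ty.dom] at hd
  | const n => intro dB' cB' B _ hd _; simp [Ty.dom] at hd
  | arrow P Q _ _ =>
    intro dB' cB' B hcon hd hc
    simp [Ty.dom] at hd
    simp [Ty.cod] at hc
    subst hd; subst hc
    have hpart : Ty.Part (.arrow P Q) B := hcon _ (.arrow P Q)
    have := part_depth_le hpart
    simp [Ty.depth] at this
    constructor
    · have h1 := le_max_left P.depth Q.depth; omega
    · have h1 := le_max_right P.depth Q.depth; omega
  | inter B1 B2 ih1 ih2 =>
    intro dB' cB' B hcon hd hc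
    rcases h1 : B1.dom with _ | d1 <;> rcases h2 : B2.dom with _ | d2 <;>
      simp [Ty.dom, h1, h2] at hd
    rcases h3 : B1.cod with _ | c1 <;> rcases h4 : B2.cod with _ | c2 <;>
      simp [Ty.cod, h3, h4] at hc
    subst hd; subst hc
    have hc1 : Ty.Contain B1 B := fun X hx => hcon X (.interL hx)
    have hc2 : Ty.Contain B2 B := fun X hx => hcon X (.interR hx)
    obtain ⟨ha1, ha2⟩ := ih1 hc1 h1 h3
    obtain ⟨hb1, hb2⟩ := ih2 hc2 h2 h4
    constructor <;> simp [Ty.depth] <;> omega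

lemma factor_str : ∀ (B' : Ty) {A B dB' cB' : Ty}, Ty.NSub A B → Ty.Contain B' B →
    B'.dom = some dB' → B'.cod = some cB' → ¬ Ty.TopInCod B' →
    ∃ B'' dB'' cB'', Ty.Contain B'' A ∧ B''.dom = some dB'' ∧ B''.cod = some cB'' ∧
      Ty.NSub dB' dB'' ∧ Ty.NSub cB'' cB' ∧ ¬ Ty.TopInCod B'' := by
  intro B'
  induction B' with
  | U => intro A B dB' cB' _ _ hd _ _; simp [Ty.dom] at hd
  | const n => intro A B dB' cB' _ _ hd _ _; simp [Ty.dom] at hd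
  | arrow P Q _ _ =>
    intro A B dB' cB' h1 hcon hd hc hntic
    simp [Ty.dom] at hd
    simp [Ty.cod] at hc
    subst hd; subst hc
    have hpart : Ty.Part (.arrow P Q) B := hcon _ (.arrow P Q)
    have hQ : ¬ Ty.Top Q := fun h => hntic ⟨P, Q, .arrow P Q, h⟩
    exact part_inv h1 hpart hQ
  | inter B1 B2 ih1 ih2 =>
    intro A B dB' cB' h1 hcon hd hc hntic
    rcases e1 : B1.dom with _ | d1 <;> rcases e2 : B2.dom with _ | d2 <;>
      simp [Ty.dom, e1, e2] at hd
    rcases e3 : B1.cod with _ | c1 <;> rcases e4 : B2.cod with _ | c2 <;>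
      simp [Ty.cod, e3, e4] at hc
    subst hd; subst hc
    have hc1 : Ty.Contain B1 B := fun X hx => hcon X (.interL hx)
    have hc2 : Ty.Contain B2 B := fun X hx => hcon X (.interR hx)
    have hn1 : ¬ Ty.TopInCod B1 := fun ⟨P, Q, hp, ht⟩ => hntic ⟨P, Q, .interL hp, ht⟩
    have hn2 : ¬ Ty.TopInCod B2 := fun ⟨P, Q, hp, ht⟩ => hntic ⟨P, Q, .interR hp, ht⟩
    obtain ⟨X1, u1, v1, hconX1, hdX1, hcX1, hs1, hs1', hnX1⟩ := ih1 h1 hc1 e1 e3 hn1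
    obtain ⟨X2, u2, v2, hconX2, hdX2, hcX2, hs2, hs2', hnX2⟩ := ih2 h1 hc2 e2 e4 hn2
    refine ⟨.inter X1 X2, .inter u1 u2, .inter v1 v2, ?_, ?_, ?_, ?_, ?_, ?_⟩
    · intro X hx
      cases hx with
      | interL hx => exact hconX1 X hx
      | interR hx => exact hconX2 X hx
    · simp [Ty.dom, hdX1, hdX2]
    · simp [Ty.cod, hcX1, hcX2]
    · exact .glb (.lbL hs1) (.lbR hs2)
    · exact .glb (.lbL hs1') (.lbR hs2')
    · rintro ⟨P, Q, hp, ht⟩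
      cases hp with
      | interL hp => exact hnX1 ⟨P, Q, hp, ht⟩
      | interR hp => exact hnX2 ⟨P, Q, hp, ht⟩

lemma trans_aux : ∀ n m : ℕ, ∀ A B C : Ty, B.depth < n → B.size + C.size < m →
    Ty.NSub A B → Ty.NSub B C → Ty.NSub A C := by
  intro n
  induction n with
  | zero => intro m A B C h; omega
  | succ n ihn =>
    intro m
    induction m with
    | zero => intro A B C _ h; omega
    | succ m ihm =>
      intro A B C hd hs h1 h2
      cases h2 with
      | reflU => exact h1
      | reflC k => exact h1
      | lbL h =>
        obtain ⟨hL, _⟩ := nsub_inter_inv h1 rfl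
        refine ihm A _ C ?_ ?_ hL h <;> simp [Ty.depth, Ty.size] at hd hs ⊢ <;> omega
      | lbR h =>
        obtain ⟨_, hR⟩ := nsub_inter_inv h1 rfl
        refine ihm A _ C ?_ ?_ hR h <;> simp [Ty.depth, Ty.size] at hd hs ⊢ <;> omega
      | glb hC hD =>
        refine .glb (ihm A B _ hd ?_ h1 hC) (ihm A B _ hd ?_ h1 hD) <;>
          simp [Ty.size] at hs ⊢ <;> omega
      | utop => exact .utop
      | uarrow ht => exact .uarrow ht
      | arrow hcon hdom hcod hCd hcD hntop hntic =>
        obtain ⟨B'', dB'', cB'', hcon'', hdom'', hcod'', hsub1, hsub2, hntic''⟩ :=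
          factor_str _ h1 hcon hdom hcod hntic
        obtain ⟨hdd, hcd⟩ := domcod_depth _ hcon hdom hcod
        refine .arrow hcon'' hdom'' hcod'' ?_ ?_ hntop hntic''
        · exact ihn _ _ _ _ (by omega) (Nat.lt_succ_self _) hCd hsub1
        · exact ihn _ _ _ _ (by omega) (Nat.lt_succ_self _) hsub2 hcD

end TransAux

theorem nsub_trans (A B C : Ty) (h1 : Ty.NSub A B) (h2 : Ty.NSub B C) : Ty.NSub A C :=
  trans_aux (B.depth + 1) (B.size + C.size + 1) A B C (Nat.lt_succ_self _) (Nat.lt_succ_self _) h1 h2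
end

section
/- Completeness of the new subtyping relation with respect to BCD: if A ≤ B then A <: B. -/
/-!
Completeness is proved by induction on the BCD derivation, so every BCD rule has to be
admissible for `<:`. All rules but transitivity are direct. Transitivity at a middle type `B`
goes by induction on the depth of `B` and, inside it, on the derivation of `B <: C`. The
(→') case is the point: each arrow `X → Y` of the chosen `B' ⊆⁺ B` factors `A` along a
derivation of `A <: X → Y`, and these factors are glued into one factor of `A` for `C → D`.
This needs transitivity at the domains `X` (of smaller depth) and at `cod B'`, whose depth is
at most that of `B` because `⊆⁺` ignores repetitions; this is why depth, not size, is the measure.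
-/

namespace Ty

local infix:50 " <: " => NSub

theorem part_arrow_eq {P A B : Ty} (h : Part P (arrow A B)) : P = arrow A B := by
  cases h; rfl

theorem contain_inter_iff {B C E : Ty} : Contain (inter B C) E ↔ Contain B E ∧ Contain C E :=
  ⟨fun h => ⟨fun P hP => h P (.interL hP), fun P hP => h P (.interR hP)⟩,
    fun ⟨hB, hC⟩ P hP => by cases hP with
      | interL hP => exact hB P hP
      | interR hP => exact hC P hP⟩

theorem dom_inter_eq_some {A B d : Ty} :
    (inter A B).dom = some d ↔ ∃ d₁ d₂, A.dom = some d₁ ∧ B.dom = some d₂ ∧ d = inter d₁ d₂ := by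
  simp only [dom, Option.pure_def, Option.bind_eq_bind, Option.bind_eq_some_iff,
    Option.some.injEq]
  grind

theorem cod_inter_eq_some {A B c : Ty} :
    (inter A B).cod = some c ↔ ∃ c₁ c₂, A.cod = some c₁ ∧ B.cod = some c₂ ∧ c = inter c₁ c₂ := by
  simp only [cod, Option.pure_def, Option.bind_eq_bind, Option.bind_eq_some_iff,
    Option.some.injEq]
  grind

theorem depth_le_of_part {P B : Ty} (h : Part P B) : P.depth ≤ B.depth := by
  induction h <;> simp only [depth] at * <;> omega

theorem depth_le_of_contain {B E : Ty} (h : Contain B E) : B.depth ≤ E.depth := by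
  induction B with
  | U | const _ => exact Nat.zero_le _
  | arrow X Y => exact depth_le_of_part (h _ (.arrow X Y))
  | inter B₁ B₂ ih₁ ih₂ =>
    obtain ⟨h₁, h₂⟩ := contain_inter_iff.mp h
    simpa only [depth] using max_le (ih₁ h₁) (ih₂ h₂)

theorem depth_cod_lt {B c : Ty} (h : B.cod = some c) : c.depth < B.depth := by
  induction B generalizing c with
  | U | const _ => cases h
  | arrow X Y => cases h; simp only [depth]; omega
  | inter B₁ B₂ ih₁ ih₂ =>
    obtain ⟨c₁, c₂, h₁, h₂, rfl⟩ := cod_inter_eq_some.mp h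
    have := ih₁ h₁
    have := ih₂ h₂
    simp only [depth]; omega

theorem topInCod_arrow_iff {X Y : Ty} : TopInCod (arrow X Y) ↔ Top Y :=
  ⟨fun ⟨_, _, hP, hY⟩ => by cases part_arrow_eq hP; exact hY, fun hY => ⟨X, Y, .arrow X Y, hY⟩⟩

theorem topInCod_inter_iff {B C : Ty} : TopInCod (inter B C) ↔ TopInCod B ∨ TopInCod C := by
  constructor
  · rintro ⟨X, Y, hP, hY⟩
    cases hP with
    | interL hP => exact .inl ⟨X, Y, hP, hY⟩
    | interR hP => exact .inr ⟨X, Y, hP, hY⟩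
  · rintro (⟨X, Y, hP, hY⟩ | ⟨X, Y, hP, hY⟩)
    exacts [⟨X, Y, .interL hP, hY⟩, ⟨X, Y, .interR hP, hY⟩]

theorem Top.of_part {P B : Ty} (ht : Top B) (h : Part P B) : Top P := by
  induction h with
  | atomU | atomC _ | arrow _ _ => exact ht
  | interL _ ih => cases ht with | inter h _ => exact ih h
  | interR _ ih => cases ht with | inter _ h => exact ih h

theorem topInCod_of_contain_top {B E c : Ty} (hE : Top E) (h : Contain B E) (hc : B.cod = some c) :
    TopInCod B := by
  induction B generalizing c with
  | U | const _ => cases hc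
  | arrow X Y =>
    cases hE.of_part (h _ (.arrow X Y)) with
    | arrow hY => exact topInCod_arrow_iff.mpr hY
  | inter B₁ B₂ ih₁ _ =>
    obtain ⟨c₁, _, hc₁, _⟩ := cod_inter_eq_some.mp hc
    exact topInCod_inter_iff.mpr (.inl (ih₁ (contain_inter_iff.mp h).1 hc₁))

theorem nsub_of_top {A B : Ty} (h : Top B) : A <: B := by
  induction h with
  | u => exact .utop
  | arrow h => exact .uarrow h
  | inter _ _ ih₁ ih₂ => exact .glb ih₁ ih₂

theorem Top.of_nsub {B D : Ty} (h : B <: D) (ht : Top B) : Top D := by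
  induction h with
  | reflU | utop => exact .u
  | reflC _ => cases ht
  | lbL _ ih => cases ht with | inter h _ => exact ih h
  | lbR _ ih => cases ht with | inter _ h => exact ih h
  | glb _ _ ih₁ ih₂ => exact .inter (ih₁ ht) (ih₂ ht)
  | arrow hB _ hc _ _ _ hnt => exact absurd (topInCod_of_contain_top ht hB hc) hnt
  | uarrow h => exact .arrow h

theorem nsub_inter_iff {A B C : Ty} : A <: inter B C ↔ A <: B ∧ A <: C := by
  refine ⟨fun h => ?_, fun ⟨hB, hC⟩ => .glb hB hC⟩
  generalize hE : inter B C = E at h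
  induction h with
  | lbL _ ih => exact ⟨.lbL (ih hE).1, .lbL (ih hE).2⟩
  | lbR _ ih => exact ⟨.lbR (ih hE).1, .lbR (ih hE).2⟩
  | glb hB hC => cases hE; exact ⟨hB, hC⟩
  | _ => cases hE

theorem nsub_of_part {A B P : Ty} (h : A <: B) (hP : Part P B) : A <: P := by
  induction hP generalizing A with
  | atomU | atomC _ | arrow _ _ => exact h
  | interL _ ih => exact ih (nsub_inter_iff.mp h).1
  | interR _ ih => exact ih (nsub_inter_iff.mp h).2

theorem nsub_of_contain {A B E : Ty} (h : A <: E) (hB : Contain B E) : A <: B := by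
  induction B with
  | U => exact .utop
  | const n => exact nsub_of_part h (hB _ (.atomC n))
  | arrow X Y => exact nsub_of_part h (hB _ (.arrow X Y))
  | inter B₁ B₂ ih₁ ih₂ =>
    obtain ⟨h₁, h₂⟩ := contain_inter_iff.mp hB
    exact .glb (ih₁ h₁) (ih₂ h₂)

theorem nsub_arrow {A B C D : Ty} (hC : C <: A) (hB : B <: D) : arrow A B <: arrow C D := by
  by_cases hD : Top D
  · exact .uarrow hD
  · have hBt : ¬ Top B := fun ht => hD (ht.of_nsub hB)
    exact .arrow (B := arrow A B) (fun _ h => h) rfl rfl hC hB hD (mt topInCod_arrow_iff.mp hBt)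

theorem nsub_refl (A : Ty) : A <: A := by
  induction A with
  | U => exact .reflU
  | const n => exact .reflC n
  | arrow _ _ ih₁ ih₂ => exact nsub_arrow ih₁ ih₂
  | inter _ _ ih₁ ih₂ => exact .glb (.lbL ih₁) (.lbR ih₂)

theorem nsub_distrib (A B C : Ty) : inter (arrow A B) (arrow A C) <: arrow A (inter B C) := by
  by_cases hB : Top B <;> by_cases hC : Top C
  · exact .uarrow (.inter hB hC)
  · exact .lbR (nsub_arrow (nsub_refl A) (.glb (nsub_of_top hB) (nsub_refl C)))
  · exact .lbL (nsub_arrow (nsub_refl A) (.glb (nsub_refl B) (nsub_of_top hC)))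
  · refine .arrow (B := inter (arrow A B) (arrow A C)) (fun _ h => h) rfl rfl
      (.glb (nsub_refl A) (nsub_refl A)) (nsub_refl _) ?_ ?_
    · rintro (_ | _ | ⟨hB', _⟩); exact hB hB'
    · simp only [topInCod_inter_iff, topInCod_arrow_iff]; tauto

theorem Factors.mono {C D A A' : Ty} (hA : Contain A A') : Factors C D A → Factors C D A' :=
  fun ⟨F, dF, cF, hF, hd, hc, h₁, h₂, h₃⟩ =>
    ⟨F, dF, cF, fun P hP => hA P (hF P hP), hd, hc, h₁, h₂, h₃⟩

theorem Factors.inter {C D₁ D₂ A : Ty} :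
    Factors C D₁ A → Factors C D₂ A → Factors C (inter D₁ D₂) A := by
  rintro ⟨F₁, d₁, c₁, hF₁, hd₁, hc₁, hC₁, hD₁, ht₁⟩ ⟨F₂, d₂, c₂, hF₂, hd₂, hc₂, hC₂, hD₂, ht₂⟩
  refine ⟨.inter F₁ F₂, .inter d₁ d₂, .inter c₁ c₂, contain_inter_iff.mpr ⟨hF₁, hF₂⟩,
    dom_inter_eq_some.mpr ⟨d₁, d₂, hd₁, hd₂, rfl⟩, cod_inter_eq_some.mpr ⟨c₁, c₂, hc₁, hc₂, rfl⟩,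
    .glb hC₁ hC₂, .glb (.lbL hD₁) (.lbR hD₂), ?_⟩
  rw [topInCod_inter_iff]
  tauto

theorem factors_of_nsub_arrow {A X Y : Ty} (h : A <: arrow X Y) (hY : ¬ Top Y) :
    Factors X Y A := by
  generalize hE : arrow X Y = E at h
  induction h with
  | lbL _ ih => exact (ih hE).mono fun _ h => .interL h
  | lbR _ ih => exact (ih hE).mono fun _ h => .interR h
  | arrow hB hd hc hX hY' _ ht => cases hE; exact ⟨_, _, _, hB, hd, hc, hX, hY', ht⟩
  | uarrow hD => cases hE; exact absurd hD hY
  | _ => cases hE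

def TransAt (B : Ty) : Prop := ∀ A C, A <: B → B <: C → A <: C

theorem factors_of_nsub {A B C d c : Ty} (h : A <: B) (hd : B.dom = some d) (hc : B.cod = some c)
    (ht : ¬ TopInCod B) (htrans : ∀ M : Ty, M.depth < B.depth → TransAt M) (hC : C <: d) :
    Factors C c A := by
  induction B generalizing C d c with
  | U | const _ => cases hd
  | arrow X Y =>
    cases hd; cases hc
    obtain ⟨F, dF, cF, hF, hdF, hcF, hX, hY, htF⟩ :=
      factors_of_nsub_arrow h (mt topInCod_arrow_iff.mpr ht)
    have hXtrans := htrans X (by simp only [depth]; omega)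
    exact ⟨F, dF, cF, hF, hdF, hcF, hXtrans C dF hC hX, hY, htF⟩
  | inter B₁ B₂ ih₁ ih₂ =>
    obtain ⟨d₁, d₂, hd₁, hd₂, rfl⟩ := dom_inter_eq_some.mp hd
    obtain ⟨c₁, c₂, hc₁, hc₂, rfl⟩ := cod_inter_eq_some.mp hc
    rw [topInCod_inter_iff, not_or] at ht
    rw [nsub_inter_iff] at h hC
    exact (ih₁ h.1 hd₁ hc₁ ht.1 (fun M hM => htrans M (by simp only [depth]; omega)) hC.1).inter
      (ih₂ h.2 hd₂ hc₂ ht.2 (fun M hM => htrans M (by simp only [depth]; omega)) hC.2)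

theorem nsub_trans_of_depth_le {n : ℕ} (IH : ∀ M : Ty, M.depth < n → TransAt M)
    {B C : Ty} (h : B <: C) {A : Ty} (hB : B.depth ≤ n) (hA : A <: B) : A <: C := by
  induction h generalizing A with
  | reflU | reflC _ => exact hA
  | lbL _ ih => exact ih (le_trans (by simp only [depth]; omega) hB) (nsub_inter_iff.mp hA).1
  | lbR _ ih => exact ih (le_trans (by simp only [depth]; omega) hB) (nsub_inter_iff.mp hA).2
  | glb _ _ ih₁ ih₂ => exact .glb (ih₁ hB hA) (ih₂ hB hA)
  | arrow hcont hd hc hC _ hD ht _ ih =>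
    have hdepth := depth_le_of_contain hcont
    obtain ⟨F, dF, cF, hF, hdF, hcF, hCF, hcF', htF⟩ := factors_of_nsub (nsub_of_contain hA hcont)
      hd hc ht (fun M hM => IH M (by omega)) hC
    exact .arrow hF hdF hcF hCF (ih (by have := depth_cod_lt hc; omega) hcF') hD htF
  | utop => exact .utop
  | uarrow hD => exact .uarrow hD

theorem nsub_trans {A B C : Ty} (hA : A <: B) (hB : B <: C) : A <: C := by
  induction h : B.depth using Nat.strong_induction_on generalizing A B C with
  | _ n ih => exact nsub_trans_of_depth_le (fun _ hM _ _ hA hB => ih _ hM hA hB rfl) hB h.le hA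

end Ty

theorem nsub_complete (A B : Ty) (h : Ty.BSub A B) : Ty.NSub A B := by
  induction h with
  | refl A => exact Ty.nsub_refl A
  | trans _ _ ih₁ ih₂ => exact Ty.nsub_trans ih₁ ih₂
  | inclL A _ => exact .lbL (Ty.nsub_refl A)
  | inclR _ B => exact .lbR (Ty.nsub_refl B)
  | glb _ _ ih₁ ih₂ => exact .glb ih₁ ih₂
  | arrow _ _ ih₁ ih₂ => exact Ty.nsub_arrow ih₁ ih₂
  | distrib A B C => exact Ty.nsub_distrib A B C
  | utop _ => exact .utop
  | uarrow _ => exact .uarrow .u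
end
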